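/- Let G be a group, n ≥ 3, E the set of idempotents of End F_n(G), and IG(E) the free idempotent generated monoid over E. Let u, v ∈ G and let a, b, c : {1,…,n} → G with a(1) = b(1) = c(1) = 1 and indices j, k, l ∈ {1,…,n} satisfy a(j) = u⁻¹, b(k) = v⁻¹ and c(l) = (uv)⁻¹. Then in IG(E): (ē_{11} ē_{a,j} ē_{11})(ē_{11} ē_{b,k} ē_{11}) = ē_{11} ē_{c,l} ē_{11}. (Writing w_u = ē_{11} ē_{a,j} ē_{11} for any choice with a(j) = u⁻¹, this says w_u w_v = w_{uv}.) -/

import Mathlib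

/-!
If `e k = e` and `f k = f` for an idempotent `k`, both pairs `(e, k)` and `(k, f)` are basic, so
`ē f̄ = ē k̄ f̄ = ē (k f)‾` in `IG(E)`; dually on the left. In `End F_n(G)` suitable idempotents of
rank two let one change the coefficients of the right factor away from two indices, or move the
index of the left factor. These moves show that `ē₁₁ ē_{a,j} ē₁₁` depends only on `a 1 * (a j)⁻¹`,
and, using three distinct indices, rewrite a product of two such sandwiches into a single one.
-/

/-- An endomorphism of the rank-`n` free left `G`-act `F_n(G) = G × Fin n`
(the formal symbols `g x_i` are the pairs `(g, i)`), where the action is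
`h • (g, i) = (h * g, i)` and equivariance says `(h • x) a = h • (x a)`. -/
structure ActEnd (G : Type*) [Group G] (n : ℕ) : Type _ where
  toFun : G × Fin n → G × Fin n
  equivariant : ∀ (h : G) (x : G × Fin n),
    toFun (h * x.1, x.2) = (h * (toFun x).1, (toFun x).2)

namespace ActEnd

variable {G : Type*} [Group G] {n : ℕ}

/-- Composition is written left-to-right: `x (a * b) = (x a) b`. -/
instance : Monoid (ActEnd G n) where
  mul a b := ⟨fun x => b.toFun (a.toFun x), by
    intro h x
    try dsimp only
    rw [a.equivariant h x, b.equivariant]⟩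
  one := ⟨id, fun _ _ => rfl⟩
  mul_assoc _ _ _ := rfl
  one_mul _ := rfl
  mul_one _ := rfl

@[simp] theorem mul_toFun (a b : ActEnd G n) (x : G × Fin n) :
    (a * b).toFun x = b.toFun (a.toFun x) := rfl

theorem ext' {a b : ActEnd G n} (h : a.toFun = b.toFun) : a = b := by
  cases a; cases b; cases h; rfl

/-- The rank of an endomorphism of `F_n(G)`: the number of indices `j` such
that `G x_j` meets the image. -/
noncomputable def rank (a : ActEnd G n) : ℕ :=
  Nat.card {j : Fin n // ∃ x, (a.toFun x).2 = j}

end ActEnd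

namespace ActEnd

variable {G : Type*} [Group G] {n : ℕ}

/-- The rank-1 idempotent `e_{a,j}` given by `(g x_t) e_{a,j} = (g * a t * (a j)⁻¹) x_j`.
Taking `a` constantly `1` gives `e_{1j}`, and also `j = 0` gives `e_{11}`
(indices `1, …, n` are realised as `Fin n`, with `1 ↦ 0`). -/
def eaj (a : Fin n → G) (j : Fin n) : ActEnd G n :=
  ⟨fun x => (x.1 * a x.2 * (a j)⁻¹, j), by intro h x; simp [mul_assoc]⟩

theorem eaj_idem (a : Fin n → G) (j : Fin n) : eaj a j * eaj a j = eaj a j := by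
  apply ext'
  funext x
  simp [eaj, mul_assoc]

/-- The map `a_g : g' x_t ↦ (g' * g) x_1`. -/
def aMap (g : G) (h0 : 0 < n) : ActEnd G n :=
  ⟨fun x => (x.1 * g, ⟨0, h0⟩), by intro h x; simp [mul_assoc]⟩

end ActEnd

/-- The principal left ideal `M a` of `a`. -/
def lIdeal {M : Type*} [Monoid M] (a : M) : Set M := Set.range fun m => m * a

/-- The principal right ideal `a M` of `a`. -/
def rIdeal {M : Type*} [Monoid M] (a : M) : Set M := Set.range fun m => a * m

/-- The `H`-class of `e`: all elements that are both `L`- and `R`-related to `e`. -/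
def hClass {M : Type*} [Monoid M] (e : M) : Set M :=
  {a | lIdeal a = lIdeal e ∧ rIdeal a = rIdeal e}

/-- The defining relation of the free idempotent generated monoid `IG(E)`:
`ē f̄ = (e f)‾` whenever `{e, f} ∩ {e f, f e} ≠ ∅`. -/
def igRel (M : Type*) [Monoid M] :
    FreeMonoid {e : M // e * e = e} → FreeMonoid {e : M // e * e = e} → Prop :=
  fun x y => ∃ e f g : {e : M // e * e = e},
    (e.1 * f.1 = e.1 ∨ e.1 * f.1 = f.1 ∨ f.1 * e.1 = e.1 ∨ f.1 * e.1 = f.1) ∧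
    e.1 * f.1 = g.1 ∧
    x = FreeMonoid.of e * FreeMonoid.of f ∧ y = FreeMonoid.of g

/-- The free idempotent generated monoid over the biordered set of idempotents
of `M`: the presented monoid with generators `ē` for each idempotent `e` and
relations `ē f̄ = (e f)‾` whenever `{e, f} ∩ {e f, f e} ≠ ∅`. -/
abbrev IG (M : Type*) [Monoid M] : Type _ := (conGen (igRel M)).Quotient

/-- The generator `ē` of `IG(E)` corresponding to the idempotent `e`. -/
def ebar {M : Type*} [Monoid M] (e : {e : M // e * e = e}) : IG M :=
  (conGen (igRel M)).mk' (FreeMonoid.of e)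

/-- `ē_{a,j}` as an element of `IG(E)` for `E` the idempotents of `End F_n(G)`. -/
def igE {G : Type*} [Group G] {n : ℕ} (a : Fin n → G) (j : Fin n) : IG (ActEnd G n) :=
  ebar ⟨ActEnd.eaj a j, ActEnd.eaj_idem a j⟩

/-- `ē_{11}` as an element of `IG(E)`. -/
def ig11 {G : Type*} [Group G] {n : ℕ} (h0 : 0 < n) : IG (ActEnd G n) :=
  igE (fun _ => (1 : G)) ⟨0, h0⟩

section FreeIdempotent

variable {M : Type*} [Monoid M]

theorem ebar_mul_ebar {e f g : {e : M // e * e = e}}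
    (hbasic : e.1 * f.1 = e.1 ∨ e.1 * f.1 = f.1 ∨ f.1 * e.1 = e.1 ∨ f.1 * e.1 = f.1)
    (hg : e.1 * f.1 = g.1) :
    ebar e * ebar f = ebar g :=
  (Con.eq _).mpr (ConGen.Rel.of _ _ ⟨e, f, g, hbasic, hg, rfl, rfl⟩)

theorem ebar_mul_ebar_congr_right {e f g k : {e : M // e * e = e}}
    (hek : e.1 * k.1 = e.1) (hfk : f.1 * k.1 = f.1) (hg : k.1 * f.1 = g.1) :
    ebar e * ebar f = ebar e * ebar g :=
  calc ebar e * ebar f = ebar e * ebar k * ebar f := by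
        rw [ebar_mul_ebar (.inl hek) hek]
    _ = ebar e * ebar g := by
        rw [mul_assoc, ebar_mul_ebar (.inr (.inr (.inr hfk))) hg]

theorem ebar_mul_ebar_congr_left {e f g k : {e : M // e * e = e}}
    (hke : k.1 * e.1 = e.1) (hkf : k.1 * f.1 = f.1) (hg : e.1 * k.1 = g.1) :
    ebar e * ebar f = ebar g * ebar f :=
  calc ebar e * ebar f = ebar e * (ebar k * ebar f) := by
        rw [ebar_mul_ebar (.inr (.inl hkf)) hkf]
    _ = ebar g * ebar f := by
        rw [← mul_assoc, ebar_mul_ebar (.inr (.inr (.inl hke))) hg]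

end FreeIdempotent

namespace ActEnd

variable {G : Type*} [Group G] {n : ℕ}

/-- Every endomorphism of `F_n(G)` has this form. -/
def ofGens (π : Fin n → Fin n) (γ : Fin n → G) : ActEnd G n :=
  ⟨fun x => (x.1 * γ x.2, π x.2), by intro h x; simp [mul_assoc]⟩

@[simp] theorem ofGens_toFun (π : Fin n → Fin n) (γ : Fin n → G) (x : G × Fin n) :
    (ofGens π γ).toFun x = (x.1 * γ x.2, π x.2) := rfl

@[simp] theorem eaj_toFun (a : Fin n → G) (j : Fin n) (x : G × Fin n) :
    (eaj a j).toFun x = (x.1 * a x.2 * (a j)⁻¹, j) := rfl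

variable {π : Fin n → Fin n} {γ : Fin n → G}

theorem ofGens_mul_self (hπ : ∀ t, π (π t) = π t) (hγ : ∀ t, γ (π t) = 1) :
    ofGens π γ * ofGens π γ = ofGens π γ :=
  ext' <| funext fun x => by simp [hπ, hγ]

theorem eaj_mul_ofGens {x : Fin n → G} {r : Fin n} (hx : γ r * x (π r) = x r) :
    eaj x r * ofGens π γ = eaj x (π r) :=
  ext' <| funext fun p => by simp [← hx, mul_assoc]

theorem ofGens_mul_eaj {y y' : Fin n → G} {s : Fin n} (hy : ∀ t, γ t * y (π t) = y' t)
    (hs : y' s = y s) : ofGens π γ * eaj y s = eaj y' s :=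
  ext' <| funext fun p => by
    simp only [mul_toFun, eaj_toFun, ofGens_toFun]
    rw [hs, ← hy, mul_assoc p.1]

theorem eaj_mul_const (a : Fin n → G) (g : G) (j : Fin n) :
    eaj (fun t => a t * g) j = eaj a j :=
  ext' <| funext fun p => by simp [mul_assoc]

theorem eaj_mul_eaj_same (x y : Fin n → G) (r : Fin n) : eaj x r * eaj y r = eaj x r :=
  ext' <| funext fun p => by simp

end ActEnd

section Moves

variable {G : Type*} [Group G] {n : ℕ}

open ActEnd Function

theorem igE_mul_const (a : Fin n → G) (g : G) (j : Fin n) :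
    igE (fun t => a t * g) j = igE a j := by
  simp only [igE, eaj_mul_const]

theorem igE_mul_igE_same (x y : Fin n → G) (r : Fin n) : igE x r * igE y r = igE x r :=
  ebar_mul_ebar (.inl (eaj_mul_eaj_same x y r)) (eaj_mul_eaj_same x y r)

/-- The rank-two idempotent `x_t ↦ (y' t * (y (π t))⁻¹) x_{π t}`, with `π` retracting onto
`{r, s}`, fixes `e_{x,r}` and `e_{y,s}` from the right and turns `e_{y,s}` into `e_{y',s}`. -/
theorem igE_mul_igE_congr_right (x y y' : Fin n → G) (r s : Fin n)
    (hr : y' r = y r) (hs : y' s = y s) :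
    igE x r * igE y s = igE x r * igE y' s := by
  set π : Fin n → Fin n := update (fun _ => s) r r
  set γ : Fin n → G := fun t => y' t * (y (π t))⁻¹
  have hπr : π r = r := update_self ..
  have hπs : π s = s := by by_cases h : s = r <;> simp [π, h]
  have hπ : ∀ t, π (π t) = π t := fun t => by by_cases h : t = r <;> simp [π, h, hπs]
  have hγπ : ∀ t, γ (π t) = 1 := fun t => by
    by_cases h : t = r
    · simp [γ, h, hπr, hr]
    · simp [γ, π, h, hπs, hs]
  have hγr : γ r = 1 := by simpa [hπr] using hγπ r
  have hγs : γ s = 1 := by simpa [hπs] using hγπ s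
  refine ebar_mul_ebar_congr_right (k := ⟨ofGens π γ, ofGens_mul_self hπ hγπ⟩) ?_ ?_
    (ofGens_mul_eaj (fun t => inv_mul_cancel_right _ _) hs)
  · simpa [hπr] using
      eaj_mul_ofGens (π := π) (γ := γ) (x := x) (r := r) (by simp [hγr, hπr])
  · simpa [hπs] using
      eaj_mul_ofGens (π := π) (γ := γ) (x := y) (r := s) (by simp [hγs, hπs])

/-- The idempotent `x_t ↦ (x t * (x (π t))⁻¹) x_{π t}`, with `π` moving `i` to `i'` only,
fixes `e_{x,i}` and `e_{y,s}` from the left and turns `e_{x,i}` into `e_{x,i'}`. -/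
theorem igE_mul_igE_congr_left (x y : Fin n → G) (i i' s : Fin n)
    (h : x i * (x i')⁻¹ = y i * (y i')⁻¹) :
    igE x i * igE y s = igE x i' * igE y s := by
  set π : Fin n → Fin n := update id i i'
  set γ : Fin n → G := fun t => x t * (x (π t))⁻¹
  have hπi : π i = i' := update_self ..
  have hπ : ∀ t, π (π t) = π t := fun t => by
    by_cases ht : t = i <;> by_cases hi : i' = i <;> simp [π, ht, hi]
  have hγπ : ∀ t, γ (π t) = 1 := fun t => by simp [γ, hπ]
  have hxy : ∀ t, γ t * y (π t) = y t := fun t => by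
    by_cases ht : t = i
    · subst ht; simp [γ, hπi, h]
    · simp [γ, π, ht]
  refine ebar_mul_ebar_congr_left (k := ⟨ofGens π γ, ofGens_mul_self hπ hγπ⟩)
    (ofGens_mul_eaj (fun t => inv_mul_cancel_right _ _) rfl) (ofGens_mul_eaj hxy rfl) ?_
  simpa [hπi] using eaj_mul_ofGens (π := π) (γ := γ) (x := x) (r := i) (by simp [γ])

end Moves

section Sandwich

variable {G : Type*} [Group G] {n : ℕ} {o : Fin n}

open Function

theorem sandwich_eq_update_one {m : Fin n} (hm : m ≠ o) (b : Fin n → G) (k : Fin n) :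
    igE 1 o * igE b k * igE 1 o = igE 1 o * igE (update 1 o (b o * (b k)⁻¹)) m * igE 1 o := by
  set ρ : Fin n → G := update 1 o (b o * (b k)⁻¹)
  set b' : Fin n → G := fun t => ρ t * b k
  have hb'o : b' o = b o := by simp [b', ρ]
  have hb'k : b' k = b k := by by_cases hk : k = o <;> simp [b', ρ, hk]
  have hb'm : b' m = b k := by simp [b', ρ, hm]
  calc igE 1 o * igE b k * igE 1 o = igE 1 o * igE b' k * igE 1 o := by
        rw [igE_mul_igE_congr_right 1 b b' o k hb'o hb'k]
    _ = igE 1 o * igE b' m * igE 1 o := by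
        rw [mul_assoc, igE_mul_igE_congr_left b' 1 k m o (by simp [hb'k, hb'm]), ← mul_assoc]
    _ = igE 1 o * igE ρ m * igE 1 o := by rw [igE_mul_const]

theorem sandwich_congr {m : Fin n} (hm : m ≠ o) {b c : Fin n → G} {k l : Fin n}
    (h : b o * (b k)⁻¹ = c o * (c l)⁻¹) :
    igE 1 o * igE b k * igE 1 o = igE 1 o * igE c l * igE 1 o := by
  rw [sandwich_eq_update_one hm b k, sandwich_eq_update_one hm c l, h]

theorem sandwich_mul_sandwich_of {m m' : Fin n} {x y z : Fin n → G}
    (hy : y o = y m) (hzm : z m = y m) (hzm' : z m' = y m')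
    (hxz : x m * (x o)⁻¹ = z m * (z o)⁻¹) :
    (igE 1 o * igE x m * igE 1 o) * (igE 1 o * igE y m' * igE 1 o) =
      igE 1 o * igE z m' * igE 1 o :=
  calc (igE 1 o * igE x m * igE 1 o) * (igE 1 o * igE y m' * igE 1 o)
      = igE 1 o * igE x m * ((igE 1 o * igE 1 o) * igE y m') * igE 1 o := by
        simp only [mul_assoc]
    _ = igE 1 o * (igE x m * igE 1 m) * igE y m' * igE 1 o := by
        rw [igE_mul_igE_same, igE_mul_igE_congr_left 1 y o m m' (by simp [hy])]
        simp only [mul_assoc]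
    _ = igE 1 o * (igE x m * igE z m') * igE 1 o := by
        rw [igE_mul_igE_same, mul_assoc (igE 1 o),
          igE_mul_igE_congr_right x y z m m' hzm hzm']
    _ = igE 1 o * igE z m' * igE 1 o := by
        rw [igE_mul_igE_congr_left x z m o m' hxz, ← mul_assoc, igE_mul_igE_same]

theorem sandwich_mul_sandwich {m m' : Fin n} (hm : m ≠ o) (hm' : m' ≠ o) (hmm' : m' ≠ m)
    {a b c : Fin n → G} {j k l : Fin n}
    (h : a o * (a j)⁻¹ * (b o * (b k)⁻¹) = c o * (c l)⁻¹) :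
    (igE 1 o * igE a j * igE 1 o) * (igE 1 o * igE b k * igE 1 o) =
      igE 1 o * igE c l * igE 1 o := by
  obtain ⟨u, hu⟩ : ∃ u, a o * (a j)⁻¹ = u := ⟨_, rfl⟩
  obtain ⟨v, hv⟩ : ∃ v, b o * (b k)⁻¹ = v := ⟨_, rfl⟩
  have ha : igE 1 o * igE a j * igE 1 o = igE 1 o * igE (update 1 o u) m * igE 1 o :=
    sandwich_congr hm (by simp [hu, hm])
  have hb : igE 1 o * igE b k * igE 1 o = igE 1 o * igE (update 1 m' v⁻¹) m' * igE 1 o :=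
    sandwich_congr hm (by simp [hv, hm'.symm])
  have hc : igE 1 o * igE (update (update 1 m' v⁻¹) o u) m' * igE 1 o =
      igE 1 o * igE c l * igE 1 o :=
    sandwich_congr hm (by simp [hm', ← h, hu, hv])
  rw [ha, hb, sandwich_mul_sandwich_of (z := update (update 1 m' v⁻¹) o u)
    (by simp [hm'.symm, hmm'.symm]) (by simp [hm]) (by simp [hm']) (by simp [hm, hmm'.symm]), hc]

end Sandwich

/-- Writing `w_u = ē_{11} ē_{a,j} ē_{11}` for any choice with `a j = u⁻¹`,
we have `w_u w_v = w_{u v}` in `IG(E)`. -/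
theorem stmt17 {G : Type*} [Group G] {n : ℕ} (hn : 3 ≤ n) (u v : G)
    (a b c : Fin n → G) (ha : a ⟨0, by omega⟩ = 1) (hb : b ⟨0, by omega⟩ = 1)
    (hc : c ⟨0, by omega⟩ = 1) (j k l : Fin n)
    (hu : a j = u⁻¹) (hv : b k = v⁻¹) (huv : c l = (u * v)⁻¹) :
    (ig11 (G := G) (n := n) (by omega) * igE a j * ig11 (G := G) (n := n) (by omega)) *
        (ig11 (G := G) (n := n) (by omega) * igE b k * ig11 (G := G) (n := n) (by omega)) =
      ig11 (G := G) (n := n) (by omega) * igE c l * ig11 (G := G) (n := n) (by omega) :=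
  sandwich_mul_sandwich (o := ⟨0, by omega⟩) (m := ⟨1, by omega⟩) (m' := ⟨2, by omega⟩)
    (by simp) (by simp) (by simp) (by simp [ha, hb, hc, hu, hv, huv])
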